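/- For every j∈{1,…,M}, the sets Γ_N^{(j)} = {π∈S^M : V^N(π)=h(π)=h_j(π)}, N≥0, form a nonincreasing sequence (Γ_{N+1}^{(j)} ⊆ Γ_N^{(j)}) of nonempty, closed, convex subsets of S^M, and Γ^{(j)} := {π∈S^M : V₀(π)=h(π)=h_j(π)} equals ∩_{N≥0} Γ_N^{(j)} and is itself a nonempty, closed, convex subset of S^M; moreover Γ := {π∈S^M : V₀(π)=h(π)} = ∪_{j=1}^M Γ^{(j)} = ∩_{N≥0}{π∈S^M : V^N(π)=h(π)}. -/

import Mathlib

open MeasureTheory Finset Filter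
open scoped ENNReal

noncomputable section

/-- The analytic data of the change-diagnosis problem: a σ-finite reference measure `m`
on the observation space, probability densities `f₀, …, f_M`, the geometric parameter
`p ∈ (0,1)`, the prior `ν` on the change index, the delay cost `c > 0` and the
terminal-decision costs `a_{ij}` (with `a_{ii} = 0`). -/
structure DiagSetup (E : Type*) [MeasurableSpace E] (M : ℕ) : Type _ where
  /-- σ-finite reference measure -/
  m : Measure E
  hm : SigmaFinite m
  /-- `f 0` is the pre-change density, `f i.succ` the post-change densities -/
  f : Fin (M + 1) → E → ℝ
  hf_meas : ∀ i, Measurable (f i)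
  hf_nonneg : ∀ i x, 0 ≤ f i x
  hf_int : ∀ i, ∫ x, f i x ∂m = 1
  p : ℝ
  hp : p ∈ Set.Ioo (0 : ℝ) 1
  ν : Fin M → ℝ
  hν : ∀ i, 0 < ν i
  hνsum : ∑ i, ν i = 1
  c : ℝ
  hc : 0 < c
  a : Fin (M + 1) → Fin M → ℝ
  ha : ∀ i j, 0 ≤ a i j
  haii : ∀ i : Fin M, a i.succ i = 0
  hM : 1 ≤ M

namespace DiagSetup

variable {E : Type*} [MeasurableSpace E] {M : ℕ}

/-- `D_i(π, x)`:  `D₀(π,x) = (1-p)π₀f₀(x)` and `D_i(π,x) = (π_i + π₀ p ν_i) f_i(x)`. -/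
def D (S : DiagSetup E M) (i : Fin (M + 1)) (π : Fin (M + 1) → ℝ) (x : E) : ℝ :=
  Fin.cases ((1 - S.p) * π 0 * S.f 0 x)
    (fun j => (π j.succ + π 0 * S.p * S.ν j) * S.f j.succ x) i

/-- `D(π, x) = Σ_{i=0}^M D_i(π, x)`. -/
def Dsum (S : DiagSetup E M) (π : Fin (M + 1) → ℝ) (x : E) : ℝ :=
  ∑ i, S.D i π x

/-- The operator `T`:
`(Tg)(π) = ∫_E D(π,x) g(D₀(π,x)/D(π,x), …, D_M(π,x)/D(π,x)) m(dx)`,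
with the integrand interpreted as `0` where `D(π,x) = 0`. -/
def T (S : DiagSetup E M) (g : (Fin (M + 1) → ℝ) → ℝ) (π : Fin (M + 1) → ℝ) : ℝ :=
  ∫ x, (if S.Dsum π x = 0 then 0
        else S.Dsum π x * g fun i => S.D i π x / S.Dsum π x) ∂S.m

/-- `h_j(π) = Σ_{i=0}^M π_i a_{ij}`. -/
def hj (S : DiagSetup E M) (j : Fin M) (π : Fin (M + 1) → ℝ) : ℝ :=
  ∑ i : Fin (M + 1), π i * S.a i j

/-- `h(π) = min_{j∈{1,…,M}} h_j(π)`. -/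
def hmin (S : DiagSetup E M) (π : Fin (M + 1) → ℝ) : ℝ :=
  ⨅ j : Fin M, S.hj j π

/-- The dynamic-programming operator `(𝕄g)(π) = min{h(π), c(1-π₀) + (Tg)(π)}`. -/
def Mop (S : DiagSetup E M) (g : (Fin (M + 1) → ℝ) → ℝ) (π : Fin (M + 1) → ℝ) : ℝ :=
  min (S.hmin π) (S.c * (1 - π 0) + S.T g π)

/-- `V^N = 𝕄^N h`, the value functions of the truncated problems. -/
def V (S : DiagSetup E M) (N : ℕ) : (Fin (M + 1) → ℝ) → ℝ :=
  S.Mop^[N] S.hmin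

end DiagSetup

namespace DiagSetup

variable {E : Type*} [MeasurableSpace E] {M : ℕ}

/-- `Γ_N^{(j)} = {π ∈ S^M : V^N(π) = h(π) = h_j(π)}`. -/
def GammaN (S : DiagSetup E M) (j : Fin M) (N : ℕ) : Set (Fin (M + 1) → ℝ) :=
  {π | π ∈ stdSimplex ℝ (Fin (M + 1)) ∧ S.V N π = S.hmin π ∧ S.hmin π = S.hj j π}

/-- `Γ_N = {π ∈ S^M : V^N(π) = h(π)}`. -/
def GammaNAll (S : DiagSetup E M) (N : ℕ) : Set (Fin (M + 1) → ℝ) :=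
  {π | π ∈ stdSimplex ℝ (Fin (M + 1)) ∧ S.V N π = S.hmin π}

/-- `Γ^{(j)} = {π ∈ S^M : V₀(π) = h(π) = h_j(π)}`. -/
def Gamma (S : DiagSetup E M) (V0 : (Fin (M + 1) → ℝ) → ℝ) (j : Fin M) :
    Set (Fin (M + 1) → ℝ) :=
  {π | π ∈ stdSimplex ℝ (Fin (M + 1)) ∧ V0 π = S.hmin π ∧ S.hmin π = S.hj j π}

/-- `Γ = {π ∈ S^M : V₀(π) = h(π)}`, the optimal stopping region. -/
def GammaAll (S : DiagSetup E M) (V0 : (Fin (M + 1) → ℝ) → ℝ) :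
    Set (Fin (M + 1) → ℝ) :=
  {π | π ∈ stdSimplex ℝ (Fin (M + 1)) ∧ V0 π = S.hmin π}

end DiagSetup

/-!
Every `V^N` is continuous and concave on the simplex. Indeed `(T g)(π)` integrates over `x` the
perspective `y ↦ (∑ y) g(y / ∑ y)` of `g` at `(D_i(π, x))_i`, which is linear in `π`; the
perspective of a concave function is concave, being positively homogeneous and superadditive, and
continuity passes under the integral by dominated convergence. Since `V^N ≤ h ≤ h_j` with `h_j`
linear, `Γ_N^{(j)} = {π | h_j(π) ≤ V^N(π)}` is a closed convex superlevel set; it contains the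
vertex `e_j`, where `h_j` vanishes, and shrinks with `N` because `V^N` decreases. Finally
`V^N ↓ V₀` gives `V₀(π) = h(π)` iff `V^N(π) = h(π)` for every `N`, whence the intersection formulas.
-/

section Perspective

variable {ι : Type*} [Fintype ι]

def perspective (g : (ι → ℝ) → ℝ) (y : ι → ℝ) : ℝ :=
  if ∑ i, y i = 0 then 0 else (∑ i, y i) * g fun i => y i / ∑ j, y j

lemma div_sum_mem_stdSimplex {y : ι → ℝ} (hy : 0 ≤ y) (h : ∑ i, y i ≠ 0) :
    (fun i => y i / ∑ j, y j) ∈ stdSimplex ℝ ι :=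
  ⟨fun i => div_nonneg (hy i) (Finset.sum_nonneg fun j _ => hy j), by
    rw [← Finset.sum_div, div_self h]⟩

lemma perspective_zero (g : (ι → ℝ) → ℝ) : perspective g 0 = 0 := by
  simp [perspective]

lemma perspective_smul (g : (ι → ℝ) → ℝ) (y : ι → ℝ) {t : ℝ} (ht : 0 ≤ t) :
    perspective g (t • y) = t * perspective g y := by
  rcases ht.eq_or_lt with rfl | ht
  · simp [perspective]
  simp only [perspective, Pi.smul_apply, smul_eq_mul, ← Finset.mul_sum, mul_eq_zero, ht.ne',
    false_or]
  split_ifs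
  · rw [mul_zero]
  · simp only [mul_div_mul_left _ _ ht.ne', mul_assoc]

lemma perspective_add_le {g : (ι → ℝ) → ℝ} (hg : ConcaveOn ℝ (stdSimplex ℝ ι) g)
    {y z : ι → ℝ} (hy : 0 ≤ y) (hz : 0 ≤ z) :
    perspective g y + perspective g z ≤ perspective g (y + z) := by
  by_cases hu : ∑ i, y i = 0
  · rw [(Fintype.sum_eq_zero_iff_of_nonneg hy).1 hu, perspective_zero, zero_add, zero_add]
  by_cases hv : ∑ i, z i = 0
  · rw [(Fintype.sum_eq_zero_iff_of_nonneg hz).1 hv, perspective_zero, add_zero, add_zero]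
  have hu₀ : 0 < ∑ i, y i := (Finset.sum_nonneg fun i _ => hy i).lt_of_ne' hu
  have hv₀ : 0 < ∑ i, z i := (Finset.sum_nonneg fun i _ => hz i).lt_of_ne' hv
  have key := hg.2 (div_sum_mem_stdSimplex hy hu) (div_sum_mem_stdSimplex hz hv)
    (div_nonneg hu₀.le (add_pos hu₀ hv₀).le) (div_nonneg hv₀.le (add_pos hu₀ hv₀).le)
    (by field_simp)
  simp only [perspective, if_neg hu, if_neg hv, Pi.add_apply, Finset.sum_add_distrib,
    if_neg (add_pos hu₀ hv₀).ne']
  set u := ∑ i, y i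
  set v := ∑ i, z i
  have hcomb : (u / (u + v)) • (fun i => y i / u) + (v / (u + v)) • (fun i => z i / v) =
      fun i => (y i + z i) / (u + v) := by
    ext i
    simp only [Pi.add_apply, Pi.smul_apply, smul_eq_mul]
    field_simp
  rw [hcomb, smul_eq_mul, smul_eq_mul] at key
  calc u * g (fun i => y i / u) + v * g (fun i => z i / v)
      = (u + v) * (u / (u + v) * g (fun i => y i / u) + v / (u + v) * g fun i => z i / v) := by
        field_simp
    _ ≤ _ := mul_le_mul_of_nonneg_left key (add_pos hu₀ hv₀).le

theorem concaveOn_perspective {g : (ι → ℝ) → ℝ} (hg : ConcaveOn ℝ (stdSimplex ℝ ι) g) :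
    ConcaveOn ℝ (Set.Ici 0) (perspective g) := by
  refine ⟨convex_Ici 0, fun y hy z hz a b ha hb _ => ?_⟩
  rw [smul_eq_mul, smul_eq_mul, ← perspective_smul g y ha, ← perspective_smul g z hb]
  exact perspective_add_le hg (smul_nonneg ha hy) (smul_nonneg hb hz)

lemma perspective_mono {g₁ g₂ : (ι → ℝ) → ℝ} (h : ∀ x ∈ stdSimplex ℝ ι, g₁ x ≤ g₂ x)
    {y : ι → ℝ} (hy : 0 ≤ y) : perspective g₁ y ≤ perspective g₂ y := by
  unfold perspective
  split_ifs with h₀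
  · rfl
  · exact mul_le_mul_of_nonneg_left (h _ (div_sum_mem_stdSimplex hy h₀))
      (Finset.sum_nonneg fun i _ => hy i)

lemma perspective_nonneg {g : (ι → ℝ) → ℝ} (h : ∀ x ∈ stdSimplex ℝ ι, 0 ≤ g x)
    {y : ι → ℝ} (hy : 0 ≤ y) : 0 ≤ perspective g y := by
  simpa [perspective] using perspective_mono h hy

lemma exists_abs_perspective_le {g : (ι → ℝ) → ℝ} (hg : ContinuousOn g (stdSimplex ℝ ι)) :
    ∃ A, 0 ≤ A ∧ ∀ y, 0 ≤ y → |perspective g y| ≤ A * ∑ i, y i := by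
  obtain ⟨C, hC⟩ := (isCompact_stdSimplex ℝ ι).exists_bound_of_continuousOn hg
  refine ⟨max C 0, le_max_right _ _, fun y hy => ?_⟩
  unfold perspective
  split_ifs with h₀
  · simp [h₀]
  · rw [abs_mul, abs_of_nonneg (Finset.sum_nonneg fun i _ => hy i), mul_comm]
    exact mul_le_mul_of_nonneg_right
      ((hC _ (div_sum_mem_stdSimplex hy h₀)).trans (le_max_left _ _))
      (Finset.sum_nonneg fun i _ => hy i)

theorem continuousOn_perspective {g : (ι → ℝ) → ℝ} (hg : ContinuousOn g (stdSimplex ℝ ι)) :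
    ContinuousOn (perspective g) (Set.Ici 0) := by
  have hsum : Continuous fun y : ι → ℝ => ∑ i, y i :=
    continuous_finsetSum _ fun i _ => continuous_apply i
  intro y₀ hy₀
  by_cases h₀ : ∑ i, y₀ i = 0
  · -- the perspective is squeezed to `0` by `A ∑ y`
    obtain ⟨A, -, hA⟩ := exists_abs_perspective_le hg
    rw [ContinuousWithinAt, show perspective g y₀ = 0 from if_pos h₀]
    refine squeeze_zero_norm' (eventually_nhdsWithin_of_forall fun y hy => hA y hy) ?_
    simpa [h₀] using (((hsum.tendsto y₀).const_mul A).mono_left nhdsWithin_le_nhds :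
      Tendsto (fun y => A * ∑ i, y i) (nhdsWithin y₀ (Set.Ici 0)) _)
  · have hne : ∀ᶠ y in nhdsWithin y₀ (Set.Ici 0), ∑ i, y i ≠ 0 :=
      nhdsWithin_le_nhds (hsum.continuousAt.eventually_ne h₀)
    have hratio : ContinuousAt (fun y : ι → ℝ => fun i => y i / ∑ j, y j) y₀ :=
      continuousAt_pi.2 fun i => (continuous_apply i).continuousAt.div hsum.continuousAt h₀
    have hcont : ContinuousWithinAt (fun y => (∑ i, y i) * g fun i => y i / ∑ j, y j)
        (Set.Ici 0) y₀ :=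
      hsum.continuousWithinAt.mul <|
        (hg _ (div_sum_mem_stdSimplex hy₀ h₀)).comp_of_preimage_mem_nhdsWithin
          hratio.continuousWithinAt
          ((hne.and self_mem_nhdsWithin).mono fun y hy => div_sum_mem_stdSimplex hy.2 hy.1)
    exact hcont.congr_of_eventuallyEq (hne.mono fun y hy => if_neg hy) (if_neg h₀)

lemma measurable_perspective {g : (ι → ℝ) → ℝ} (hg : Measurable g) :
    Measurable (perspective g) := by
  have hsum : Measurable fun y : ι → ℝ => ∑ i, y i :=
    Finset.measurable_sum _ fun i _ => measurable_pi_apply i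
  exact Measurable.ite (hsum (measurableSet_singleton 0)) measurable_const
    (hsum.mul (hg.comp (measurable_pi_lambda _ fun i => (measurable_pi_apply i).div hsum)))

end Perspective

theorem concaveOn_integral {α F : Type*} [MeasurableSpace α] {μ : Measure α}
    [AddCommGroup F] [Module ℝ F] {s : Set F} {f : F → α → ℝ} (hs : Convex ℝ s)
    (hf : ∀ a, ConcaveOn ℝ s fun x => f x a) (hint : ∀ x ∈ s, Integrable (f x) μ) :
    ConcaveOn ℝ s fun x => ∫ a, f x a ∂μ := by
  refine ⟨hs, fun x hx y hy a b ha hb hab => ?_⟩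
  have hax := (hint x hx).const_mul a
  have hby := (hint y hy).const_mul b
  simp only [smul_eq_mul]
  rw [← integral_const_mul, ← integral_const_mul, ← integral_add hax hby]
  exact integral_mono (hax.add hby) (hint _ (hs hx hy ha hb hab))
    fun ω => (hf ω).2 hx hy ha hb hab

theorem Antitone.tendsto_eq_iff_forall_eq {a : ℕ → ℝ} {L b : ℝ} (ha : Antitone a)
    (hb : ∀ n, a n ≤ b) (hL : Tendsto a atTop (nhds L)) : L = b ↔ ∀ n, a n = b :=
  ⟨fun h n => le_antisymm (hb n) (h ▸ ha.le_of_tendsto hL n),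
    fun h => (tendsto_const_nhds_iff.1 ((funext h : a = fun _ => b) ▸ hL)).symm⟩

namespace DiagSetup

variable {E : Type*} [MeasurableSpace E] {M : ℕ} (S : DiagSetup E M)

local notation "Δ" => stdSimplex ℝ (Fin (M + 1))

/-- The law of the next state of the change chain when the current one has law `π`. -/
def predict : (Fin (M + 1) → ℝ) →ₗ[ℝ] Fin (M + 1) → ℝ where
  toFun π := Fin.cases ((1 - S.p) * π 0) fun j => π j.succ + π 0 * S.p * S.ν j
  map_add' π π' := by ext i; cases i using Fin.cases <;> simp <;> ring
  map_smul' t π := by ext i; cases i using Fin.cases <;> simp <;> ring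

lemma D_eq (i : Fin (M + 1)) (π : Fin (M + 1) → ℝ) (x : E) :
    S.D i π x = S.predict π i * S.f i x := by
  cases i using Fin.cases <;> simp [D, predict]

lemma predict_mem_stdSimplex {π : Fin (M + 1) → ℝ} (hπ : π ∈ Δ) : S.predict π ∈ Δ := by
  obtain ⟨hnn, hsum⟩ := hπ
  refine ⟨fun i => ?_, ?_⟩
  · cases i using Fin.cases with
    | zero => exact mul_nonneg (sub_nonneg.2 S.hp.2.le) (hnn 0)
    | succ j =>
      have := S.hp.1.le
      have := (S.hν j).le
      have := hnn 0
      have := hnn j.succ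
      simp only [predict, LinearMap.coe_mk, AddHom.coe_mk, Fin.cases_succ]
      positivity
  · rw [Fin.sum_univ_succ] at hsum ⊢
    simp only [predict, LinearMap.coe_mk, AddHom.coe_mk, Fin.cases_zero, Fin.cases_succ,
      Finset.sum_add_distrib, ← Finset.mul_sum, S.hνsum]
    linarith

-- `S.T g π` is definitionally `∫ x, perspective g (S.Dlin x π) ∂S.m`.
def Dlin (x : E) : (Fin (M + 1) → ℝ) →ₗ[ℝ] Fin (M + 1) → ℝ where
  toFun π i := S.D i π x
  map_add' π π' := by ext i; simp only [D_eq, map_add, Pi.add_apply, add_mul]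
  map_smul' t π := by
    ext i; simp only [D_eq, map_smul, Pi.smul_apply, smul_eq_mul, mul_assoc, RingHom.id_apply]

lemma Dlin_apply (x : E) (π : Fin (M + 1) → ℝ) (i : Fin (M + 1)) :
    S.Dlin x π i = S.predict π i * S.f i x :=
  S.D_eq i π x

lemma Dlin_nonneg {π : Fin (M + 1) → ℝ} (hπ : π ∈ Δ) (x : E) : 0 ≤ S.Dlin x π := fun i =>
  (S.Dlin_apply x π i).symm ▸ mul_nonneg ((S.predict_mem_stdSimplex hπ).1 i) (S.hf_nonneg i x)

lemma sum_Dlin_le {π : Fin (M + 1) → ℝ} (hπ : π ∈ Δ) (x : E) :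
    ∑ i, S.Dlin x π i ≤ ∑ i, S.f i x :=
  Finset.sum_le_sum fun i _ => (S.Dlin_apply x π i).symm ▸ mul_le_of_le_one_left (S.hf_nonneg i x)
    (mem_Icc_of_mem_stdSimplex (S.predict_mem_stdSimplex hπ) i).2

lemma integrable_sum_f : Integrable (fun x => ∑ i, S.f i x) S.m :=
  integrable_finsetSum _ fun i _ =>
    Integrable.of_integral_ne_zero (by rw [S.hf_int i]; exact one_ne_zero)

lemma measurable_Dlin : Measurable fun q : (Fin (M + 1) → ℝ) × E => S.Dlin q.2 q.1 := by
  refine measurable_pi_lambda _ fun i => ?_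
  simp only [Dlin_apply]
  exact ((continuous_apply i).comp S.predict.continuous_of_finiteDimensional).measurable.comp
    measurable_fst |>.mul ((S.hf_meas i).comp measurable_snd)

section T

variable {g : (Fin (M + 1) → ℝ) → ℝ}

lemma exists_abs_perspective_Dlin_le (hg : ContinuousOn g Δ) :
    ∃ A, ∀ π ∈ Δ, ∀ x, |perspective g (S.Dlin x π)| ≤ A * ∑ i, S.f i x := by
  obtain ⟨A, hA, hbound⟩ := exists_abs_perspective_le hg
  exact ⟨A, fun π hπ x => (hbound _ (S.Dlin_nonneg hπ x)).trans
    (mul_le_mul_of_nonneg_left (S.sum_Dlin_le hπ x) hA)⟩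

lemma integrable_perspective_Dlin (hgm : Measurable g) (hg : ContinuousOn g Δ)
    {π : Fin (M + 1) → ℝ} (hπ : π ∈ Δ) :
    Integrable (fun x => perspective g (S.Dlin x π)) S.m := by
  obtain ⟨A, hA⟩ := S.exists_abs_perspective_Dlin_le hg
  exact (S.integrable_sum_f.const_mul A).mono'
    ((measurable_perspective hgm).comp (S.measurable_Dlin.comp measurable_prodMk_left)
      |>.aestronglyMeasurable)
    (.of_forall fun x => hA π hπ x)

lemma T_nonneg (hg : ∀ π ∈ Δ, 0 ≤ g π) {π : Fin (M + 1) → ℝ} (hπ : π ∈ Δ) : 0 ≤ S.T g π :=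
  integral_nonneg fun x => perspective_nonneg hg (S.Dlin_nonneg hπ x)

lemma T_mono {g' : (Fin (M + 1) → ℝ) → ℝ} (hgm : Measurable g) (hg : ContinuousOn g Δ)
    (hgm' : Measurable g') (hg' : ContinuousOn g' Δ) (hle : ∀ π ∈ Δ, g π ≤ g' π)
    {π : Fin (M + 1) → ℝ} (hπ : π ∈ Δ) : S.T g π ≤ S.T g' π :=
  integral_mono (S.integrable_perspective_Dlin hgm hg hπ)
    (S.integrable_perspective_Dlin hgm' hg' hπ)
    fun x => perspective_mono hle (S.Dlin_nonneg hπ x)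

lemma measurable_T (hgm : Measurable g) : Measurable (S.T g) := by
  have := S.hm
  exact ((measurable_perspective hgm).comp S.measurable_Dlin).stronglyMeasurable
    |>.integral_prod_right' |>.measurable

lemma continuousOn_T (hgm : Measurable g) (hg : ContinuousOn g Δ) :
    ContinuousOn (S.T g) Δ := by
  obtain ⟨A, hA⟩ := S.exists_abs_perspective_Dlin_le hg
  exact continuousOn_of_dominated
    (fun π hπ => (S.integrable_perspective_Dlin hgm hg hπ).aestronglyMeasurable)
    (fun π hπ => .of_forall fun x => hA π hπ x) (S.integrable_sum_f.const_mul A)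
    (.of_forall fun x => (continuousOn_perspective hg).comp
      (S.Dlin x).continuous_of_finiteDimensional.continuousOn fun π hπ => S.Dlin_nonneg hπ x)

lemma concaveOn_T (hgm : Measurable g) (hg : ContinuousOn g Δ) (hgc : ConcaveOn ℝ Δ g) :
    ConcaveOn ℝ Δ (S.T g) :=
  concaveOn_integral (convex_stdSimplex ℝ _)
    (fun x => ((concaveOn_perspective hgc).comp_linearMap (S.Dlin x)).subset
      (fun _ hπ => S.Dlin_nonneg hπ x) (convex_stdSimplex ℝ _))
    fun _ hπ => S.integrable_perspective_Dlin hgm hg hπ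

end T

lemma hj_add_smul (j : Fin M) (π π' : Fin (M + 1) → ℝ) (a b : ℝ) :
    S.hj j (a • π + b • π') = a * S.hj j π + b * S.hj j π' := by
  simp only [hj, Pi.add_apply, Pi.smul_apply, smul_eq_mul, add_mul, mul_assoc,
    Finset.sum_add_distrib, Finset.mul_sum]

lemma convexOn_hj (j : Fin M) : ConvexOn ℝ Δ (S.hj j) :=
  ⟨convex_stdSimplex ℝ _, fun π _ π' _ a b _ _ _ => (S.hj_add_smul j π π' a b).le⟩

lemma continuous_hj (j : Fin M) : Continuous (S.hj j) :=
  continuous_finsetSum _ fun i _ => (continuous_apply i).mul continuous_const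

lemma hmin_le_hj (j : Fin M) (π : Fin (M + 1) → ℝ) : S.hmin π ≤ S.hj j π :=
  ciInf_le (Set.finite_range _).bddBelow j

lemma hmin_nonneg {π : Fin (M + 1) → ℝ} (hπ : π ∈ Δ) : 0 ≤ S.hmin π :=
  have : Nonempty (Fin M) := ⟨⟨0, S.hM⟩⟩
  le_ciInf fun j => Finset.sum_nonneg fun i _ => mul_nonneg (hπ.1 i) (S.ha i j)

lemma concaveOn_hmin : ConcaveOn ℝ Δ S.hmin := by
  have : Nonempty (Fin M) := ⟨⟨0, S.hM⟩⟩
  refine ⟨convex_stdSimplex ℝ _, fun π _ π' _ a b ha hb _ => le_ciInf fun j => ?_⟩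
  rw [S.hj_add_smul, smul_eq_mul, smul_eq_mul]
  gcongr <;> exact S.hmin_le_hj j _

lemma continuous_hmin : Continuous S.hmin := by
  have : Nonempty (Fin M) := ⟨⟨0, S.hM⟩⟩
  have h : S.hmin = fun π => Finset.univ.inf' Finset.univ_nonempty fun j => S.hj j π :=
    funext fun π => (Finset.inf'_univ_eq_ciInf _).symm
  rw [h]
  exact Continuous.finset_inf'_apply _ fun j _ => S.continuous_hj j

lemma hj_vertex (j : Fin M) : S.hj j (Pi.single j.succ 1) = 0 := by
  simp [hj, Pi.single_apply, S.haii]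

lemma hmin_vertex (j : Fin M) : S.hmin (Pi.single j.succ 1) = 0 :=
  le_antisymm (S.hj_vertex j ▸ S.hmin_le_hj j _) (S.hmin_nonneg (single_mem_stdSimplex ℝ _))

structure Regular (g : (Fin (M + 1) → ℝ) → ℝ) : Prop where
  measurable : Measurable g
  continuousOn : ContinuousOn g Δ
  concaveOn : ConcaveOn ℝ Δ g
  nonneg : ∀ π ∈ Δ, 0 ≤ g π

lemma regular_hmin : Regular S.hmin :=
  ⟨S.continuous_hmin.measurable, S.continuous_hmin.continuousOn, S.concaveOn_hmin,
    fun _ => S.hmin_nonneg⟩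

lemma concaveOn_delayCost : ConcaveOn ℝ Δ fun π => S.c * (1 - π 0) :=
  ⟨convex_stdSimplex ℝ _, fun π _ π' _ a b _ _ hab => le_of_eq <| by
    simp only [Pi.add_apply, Pi.smul_apply, smul_eq_mul]
    linear_combination S.c * hab⟩

lemma Regular.Mop {g : (Fin (M + 1) → ℝ) → ℝ} (hg : Regular g) : Regular (S.Mop g) where
  measurable := S.continuous_hmin.measurable.min
    (((measurable_const.sub (measurable_pi_apply 0)).const_mul S.c).add (S.measurable_T hg.measurable))
  continuousOn := S.continuous_hmin.continuousOn.inf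
    ((continuous_const.mul (continuous_const.sub (continuous_apply 0))).continuousOn.add
      (S.continuousOn_T hg.measurable hg.continuousOn))
  concaveOn := S.concaveOn_hmin.inf <| S.concaveOn_delayCost.add <|
    S.concaveOn_T hg.measurable hg.continuousOn hg.concaveOn
  nonneg _ hπ := le_min (S.hmin_nonneg hπ) (add_nonneg
    (mul_nonneg S.hc.le (sub_nonneg.2 (mem_Icc_of_mem_stdSimplex hπ 0).2)) (S.T_nonneg hg.nonneg hπ))

lemma V_succ (N : ℕ) : S.V (N + 1) = S.Mop (S.V N) :=
  Function.iterate_succ_apply' _ _ _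

lemma regular_V (N : ℕ) : Regular (S.V N) := by
  induction N with
  | zero => exact S.regular_hmin
  | succ N ih => rw [V_succ]; exact ih.Mop S

lemma V_le_hmin (N : ℕ) (π : Fin (M + 1) → ℝ) : S.V N π ≤ S.hmin π := by
  cases N with
  | zero => exact le_rfl
  | succ N => rw [V_succ]; exact min_le_left _ _

lemma Mop_mono {g g' : (Fin (M + 1) → ℝ) → ℝ} (hg : Regular g) (hg' : Regular g')
    (hle : ∀ π ∈ Δ, g π ≤ g' π) {π : Fin (M + 1) → ℝ} (hπ : π ∈ Δ) :
    S.Mop g π ≤ S.Mop g' π :=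
  min_le_min le_rfl <| add_le_add_right
    (S.T_mono hg.measurable hg.continuousOn hg'.measurable hg'.continuousOn hle hπ) _

lemma V_succ_le (N : ℕ) {π : Fin (M + 1) → ℝ} (hπ : π ∈ Δ) : S.V (N + 1) π ≤ S.V N π := by
  induction N generalizing π with
  | zero => exact S.V_le_hmin 1 π
  | succ N ih =>
    simpa only [V_succ] using
      S.Mop_mono (S.regular_V (N + 1)) (S.regular_V N) (fun _ hπ' => ih hπ') hπ

lemma V_antitone {π : Fin (M + 1) → ℝ} (hπ : π ∈ Δ) : Antitone fun N => S.V N π :=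
  antitone_nat_of_succ_le fun N => S.V_succ_le N hπ

lemma V_vertex (N : ℕ) (j : Fin M) : S.V N (Pi.single j.succ 1) = 0 :=
  le_antisymm ((S.V_le_hmin N _).trans_eq (S.hmin_vertex j))
    ((S.regular_V N).nonneg _ (single_mem_stdSimplex ℝ _))

lemma GammaN_eq (j : Fin M) (N : ℕ) : S.GammaN j N = {π ∈ Δ | S.hj j π ≤ S.V N π} := by
  ext π
  refine ⟨fun ⟨hπ, hV, hh⟩ => ⟨hπ, (hV.trans hh).ge⟩, fun ⟨hπ, hle⟩ => ⟨hπ, ?_, ?_⟩⟩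
  · exact le_antisymm (S.V_le_hmin N π) ((S.hmin_le_hj j π).trans hle)
  · exact le_antisymm (S.hmin_le_hj j π) (hle.trans (S.V_le_hmin N π))

lemma GammaN_succ_subset (j : Fin M) (N : ℕ) : S.GammaN j (N + 1) ⊆ S.GammaN j N := by
  simp only [GammaN_eq]
  exact fun π ⟨hπ, hle⟩ => ⟨hπ, hle.trans (S.V_succ_le N hπ)⟩

lemma vertex_mem_GammaN (j : Fin M) (N : ℕ) : Pi.single j.succ 1 ∈ S.GammaN j N := by
  rw [GammaN_eq]
  exact ⟨single_mem_stdSimplex ℝ _, by rw [hj_vertex, V_vertex]⟩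

lemma isClosed_GammaN (j : Fin M) (N : ℕ) : IsClosed (S.GammaN j N) := by
  rw [GammaN_eq]
  exact (isClosed_stdSimplex ℝ _).isClosed_le (S.continuous_hj j).continuousOn
    (S.regular_V N).continuousOn

lemma convex_GammaN (j : Fin M) (N : ℕ) : Convex ℝ (S.GammaN j N) := by
  rw [GammaN_eq]
  simpa only [Pi.sub_apply, sub_nonneg] using
    ((S.regular_V N).concaveOn.sub (S.convexOn_hj j)).convex_ge 0

variable {V0 : (Fin (M + 1) → ℝ) → ℝ}

lemma eq_hmin_iff_forall_V_eq
    (hV0 : ∀ π ∈ Δ, Tendsto (fun N => S.V N π) atTop (nhds (V0 π)))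
    {π : Fin (M + 1) → ℝ} (hπ : π ∈ Δ) :
    V0 π = S.hmin π ↔ ∀ N, S.V N π = S.hmin π :=
  (S.V_antitone hπ).tendsto_eq_iff_forall_eq (fun N => S.V_le_hmin N π) (hV0 π hπ)

lemma Gamma_eq_iInter_GammaN
    (hV0 : ∀ π ∈ Δ, Tendsto (fun N => S.V N π) atTop (nhds (V0 π)))
    (j : Fin M) : S.Gamma V0 j = ⋂ N, S.GammaN j N := by
  ext π
  simp only [Gamma, GammaN, Set.mem_ofPred_eq, Set.mem_iInter]
  exact ⟨fun ⟨hπ, hV, hh⟩ N => ⟨hπ, (S.eq_hmin_iff_forall_V_eq hV0 hπ).1 hV N, hh⟩,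
    fun h => ⟨(h 0).1, (S.eq_hmin_iff_forall_V_eq hV0 (h 0).1).2 fun N => (h N).2.1, (h 0).2.2⟩⟩

lemma GammaAll_eq_iInter_GammaNAll
    (hV0 : ∀ π ∈ Δ, Tendsto (fun N => S.V N π) atTop (nhds (V0 π))) :
    S.GammaAll V0 = ⋂ N, S.GammaNAll N := by
  ext π
  simp only [GammaAll, GammaNAll, Set.mem_ofPred_eq, Set.mem_iInter]
  exact ⟨fun ⟨hπ, hV⟩ N => ⟨hπ, (S.eq_hmin_iff_forall_V_eq hV0 hπ).1 hV N⟩,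
    fun h => ⟨(h 0).1, (S.eq_hmin_iff_forall_V_eq hV0 (h 0).1).2 fun N => (h N).2⟩⟩

lemma GammaAll_eq_iUnion_Gamma : S.GammaAll V0 = ⋃ j, S.Gamma V0 j := by
  have : Nonempty (Fin M) := ⟨⟨0, S.hM⟩⟩
  ext π
  simp only [GammaAll, Gamma, Set.mem_ofPred_eq, Set.mem_iUnion]
  refine ⟨fun ⟨hπ, hV⟩ => ?_, fun ⟨_, hπ, hV, _⟩ => ⟨hπ, hV⟩⟩
  obtain ⟨j, hj⟩ := exists_eq_ciInf_of_finite (f := fun j => S.hj j π)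
  exact ⟨j, hπ, hV, hj.symm⟩

end DiagSetup

/-- for every `j`, `(Γ_N^{(j)})_N` is a nonincreasing sequence of
nonempty, closed, convex subsets of `S^M`; `Γ^{(j)} = ∩_N Γ_N^{(j)}` is nonempty,
closed and convex; and `Γ = ∪_j Γ^{(j)} = ∩_N Γ_N`. -/
theorem stopping_regions_structure {E : Type*} [MeasurableSpace E] {M : ℕ}
    (S : DiagSetup E M) (V0 : (Fin (M + 1) → ℝ) → ℝ)
    (hV0 : ∀ π ∈ stdSimplex ℝ (Fin (M + 1)),
      Tendsto (fun N => S.V N π) atTop (nhds (V0 π))) :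
    (∀ j : Fin M,
      (∀ N : ℕ, S.GammaN j (N + 1) ⊆ S.GammaN j N) ∧
      (∀ N : ℕ, (S.GammaN j N).Nonempty ∧ IsClosed (S.GammaN j N) ∧
        Convex ℝ (S.GammaN j N)) ∧
      S.Gamma V0 j = ⋂ N : ℕ, S.GammaN j N ∧
      (S.Gamma V0 j).Nonempty ∧ IsClosed (S.Gamma V0 j) ∧ Convex ℝ (S.Gamma V0 j)) ∧
    S.GammaAll V0 = ⋃ j : Fin M, S.Gamma V0 j ∧
    S.GammaAll V0 = ⋂ N : ℕ, S.GammaNAll N := by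
  have hGamma := S.Gamma_eq_iInter_GammaN hV0
  refine ⟨fun j => ⟨S.GammaN_succ_subset j, fun N => ⟨⟨_, S.vertex_mem_GammaN j N⟩,
    S.isClosed_GammaN j N, S.convex_GammaN j N⟩, hGamma j, ?_, ?_, ?_⟩,
    S.GammaAll_eq_iUnion_Gamma, S.GammaAll_eq_iInter_GammaNAll hV0⟩
  all_goals rw [hGamma j]
  · exact ⟨_, Set.mem_iInter.2 fun N => S.vertex_mem_GammaN j N⟩
  · exact isClosed_iInter fun N => S.isClosed_GammaN j N
  · exact convex_iInter fun N => S.convex_GammaN j N
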